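/- In the real octonions 𝕆, the vector w' = (−1, i)ᵀ, obtained by right-multiplying the kernel vector w = (−ℓ, iℓ)ᵀ of B = [[i,1],[ij,j]] by ℓ⁻¹, is not in the kernel of B: Bw' ≠ 0. Hence the set of eigenvectors associated to a left eigenvalue of an octonion matrix is not closed under right scalar multiplication. -/

import Mathlib

/-- Cayley–Dickson double (with γ = -1) of an algebra with involution. -/
def CD (A : Type*) : Type _ := A × A

namespace CD

variable {A : Type*}

instance [AddCommGroup A] : AddCommGroup (CD A) := inferInstanceAs (AddCommGroup (A × A))
noncomputable instance [AddCommGroup A] [Module ℝ A] : Module ℝ (CD A) :=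
  inferInstanceAs (Module ℝ (A × A))

/-- Build an element of the double from its two halves. -/
def mk (a b : A) : CD A := (a, b)

section
set_option linter.unusedSectionVars false

/-- A star operation fixing `1`. -/
class StarOne (A : Type*) [One A] [Star A] : Prop where
  star_one : star (1 : A) = 1

variable [NonAssocRing A] [StarAddMonoid A] [StarOne A]

instance : One (CD A) := ⟨((1 : A), 0)⟩
instance : Mul (CD A) :=
  ⟨fun x y => (x.1 * y.1 - star y.2 * x.2, y.2 * x.1 + x.2 * star y.1)⟩
instance : Star (CD A) := ⟨fun x => (star x.1, -x.2)⟩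

lemma mul_def (x y : CD A) :
    x * y = (x.1 * y.1 - star y.2 * x.2, y.2 * x.1 + x.2 * star y.1) := rfl
lemma one_def : (1 : CD A) = ((1 : A), 0) := rfl
lemma star_def (x : CD A) : star x = (star x.1, -x.2) := rfl
lemma add_def (x y : CD A) : x + y = (x.1 + y.1, x.2 + y.2) := rfl
lemma zero_def : (0 : CD A) = ((0 : A), 0) := rfl

instance instNonAssocRing : NonAssocRing (CD A) where
  __ := (inferInstanceAs (AddCommGroup (A × A)) : AddCommGroup (CD A))
  left_distrib a b c := by
    show a * (b + c) = a * b + a * c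
    erw [mul_def, mul_def, mul_def, add_def, add_def]
    dsimp only
    refine Prod.ext ?_ ?_ <;>
      simp [mul_def, add_def, mul_add, add_mul, star_add] <;> abel
  right_distrib a b c := by
    show (a + b) * c = a * c + b * c
    erw [mul_def, mul_def, mul_def, add_def, add_def]
    dsimp only
    refine Prod.ext ?_ ?_ <;>
      simp [mul_def, add_def, mul_add, add_mul, star_add] <;> abel
  zero_mul a := by
    show (0 : CD A) * a = 0
    rw [mul_def]
    refine Prod.ext ?_ ?_ <;> simp [mul_def, zero_def]
  mul_zero a := by
    show a * (0 : CD A) = 0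
    rw [mul_def]
    refine Prod.ext ?_ ?_ <;> simp [mul_def, zero_def]
  one_mul a := by
    show (1 : CD A) * a = a
    rw [mul_def]
    refine Prod.ext ?_ ?_ <;> simp [mul_def, one_def]
  mul_one a := by
    show a * (1 : CD A) = a
    rw [mul_def]
    refine Prod.ext ?_ ?_ <;> simp [mul_def, one_def, StarOne.star_one]

instance instStarAddMonoid : StarAddMonoid (CD A) where
  star_involutive x := by
    show star (star x) = x
    erw [star_def, star_def]
    dsimp only
    refine Prod.ext ?_ ?_ <;> simp [star_def]
  star_add x y := by
    show star (x + y) = star x + star y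
    erw [star_def, star_def, star_def, add_def, add_def]
    dsimp only
    refine Prod.ext ?_ ?_ <;> simp [star_def, add_def, add_comm]

instance instStarOne : StarOne (CD A) :=
  ⟨Prod.ext (StarOne.star_one) (by erw [star_def]; simp [one_def, star_def])⟩

end

end CD

instance : CD.StarOne ℝ := ⟨by simp⟩

/-- The real octonions, as a three-fold Cayley–Dickson double of ℝ. -/
def Octonion : Type := CD (CD (CD ℝ))

instance : NonAssocRing Octonion := inferInstanceAs (NonAssocRing (CD (CD (CD ℝ))))
instance : StarAddMonoid Octonion := inferInstanceAs (StarAddMonoid (CD (CD (CD ℝ))))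
instance : CD.StarOne Octonion := inferInstanceAs (CD.StarOne (CD (CD (CD ℝ))))
noncomputable instance : Module ℝ Octonion := inferInstanceAs (Module ℝ (CD (CD (CD ℝ))))

/-- The real sedenions, as the Cayley–Dickson double of the octonions. -/
def Sedenion : Type := CD Octonion

instance : NonAssocRing Sedenion := inferInstanceAs (NonAssocRing (CD Octonion))
instance : StarAddMonoid Sedenion := inferInstanceAs (StarAddMonoid (CD Octonion))
instance : CD.StarOne Sedenion := inferInstanceAs (CD.StarOne (CD Octonion))
noncomputable instance : Module ℝ Sedenion := inferInstanceAs (Module ℝ (CD Octonion))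

/-- Assemble a complex number, quaternion, octonion, sedenion from real coordinates. -/
def mkC (f : ℕ → ℝ) (k : ℕ) : CD ℝ := CD.mk (f k) (f (k+1))
def mkH (f : ℕ → ℝ) (k : ℕ) : CD (CD ℝ) := CD.mk (mkC f k) (mkC f (k+2))
def mkO (f : ℕ → ℝ) (k : ℕ) : Octonion := CD.mk (mkH f k) (mkH f (k+4))
def mkS (f : ℕ → ℝ) : Sedenion := CD.mk (mkO f 0) (mkO f 8)

/-- The standard basis `e₀, …, e₁₅` of the sedenions. -/
def sE (n : ℕ) : Sedenion := mkS (fun k => if k = n then 1 else 0)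

/-- The standard basis `e₀, …, e₇` of the octonions. -/
def oE (n : ℕ) : Octonion := mkO (fun k => if k = n then 1 else 0) 0

/-- Powers in a (power-associative) non-associative algebra. -/
def cdpow {A : Type*} [One A] [Mul A] (x : A) : ℕ → A
  | 0 => 1
  | n+1 => cdpow x n * x

/-! In the Cayley–Dickson octonions `i = e₁`, `j = e₂`, `ℓ = e₄` satisfy `(ij)ℓ = j(iℓ) = e₇`,
so both rows of `Bw` vanish. Right multiplication by `ℓ⁻¹` does not commute with `B`, because
`j((iℓ)ℓ⁻¹) = ji = -ij` while `((ij)ℓ)ℓ⁻¹ = ij`: the second row of `Bw'` is `-ij + ji = -2e₃ ≠ 0`. -/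

lemma Matrix.mulVec_vec2 {α : Type*} [NonUnitalNonAssocSemiring α] (a b c d x y : α) :
    Matrix.mulVec !![a, b; c, d] ![x, y] = ![a * x + b * y, c * x + d * y] := by
  ext i
  fin_cases i <;> simp [Matrix.mulVec, dotProduct, Fin.sum_univ_two]

namespace CD

variable {A : Type*}

@[simp] lemma mk_inj {a b c d : A} : mk a b = mk c d ↔ a = c ∧ b = d := Prod.ext_iff

@[simp] lemma neg_mk [AddCommGroup A] (a b : A) : -mk a b = mk (-a) (-b) := rfl

variable [NonAssocRing A]

@[simp] lemma mk_zero_zero : mk (0 : A) 0 = 0 := rfl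

variable [StarAddMonoid A]

@[simp] lemma star_mk (a b : A) : star (mk a b) = mk (star a) (-b) := rfl

@[simp] lemma mk_mul_mk (a b c d : A) :
    mk a b * mk c d = mk (a * c - star d * b) (d * a + b * star c) := rfl

end CD

/- `Octonion` is a plain `def`, so the lemmas about `CD A` do not fire on its operations. -/
namespace Octonion

@[simp] lemma mk_mul_mk (a b c d : CD (CD ℝ)) :
    @HMul.hMul Octonion Octonion Octonion _ (CD.mk a b) (CD.mk c d) =
      CD.mk (a * c - star d * b) (d * a + b * star c) := rfl

@[simp] lemma neg_mk (a b : CD (CD ℝ)) :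
    @Neg.neg Octonion _ (CD.mk a b) = CD.mk (-a) (-b) := rfl

@[simp] lemma mk_inj {a b c d : CD (CD ℝ)} :
    @Eq Octonion (CD.mk a b) (CD.mk c d) ↔ a = c ∧ b = d := Prod.ext_iff

lemma one_eq_mk : (1 : Octonion) = CD.mk (CD.mk (CD.mk 1 0) 0) 0 := rfl

end Octonion

lemma oE_one_mul_oE_two : oE 1 * oE 2 = oE 3 := by simp [oE, mkO, mkH, mkC]

lemma oE_two_mul_oE_one : oE 2 * oE 1 = -oE 3 := by simp [oE, mkO, mkH, mkC]

lemma oE_one_mul_oE_four : oE 1 * oE 4 = oE 5 := by simp [oE, mkO, mkH, mkC]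

lemma oE_three_mul_oE_four : oE 3 * oE 4 = oE 7 := by simp [oE, mkO, mkH, mkC]

lemma oE_two_mul_oE_five : oE 2 * oE 5 = oE 7 := by simp [oE, mkO, mkH, mkC]

lemma oE_four_mul_oE_four : oE 4 * oE 4 = -1 := by
  simp [oE, mkO, mkH, mkC, Octonion.one_eq_mk]

lemma oE_five_mul_oE_four : oE 5 * oE 4 = -oE 1 := by simp [oE, mkO, mkH, mkC]

lemma oE_three_ne_neg : oE 3 ≠ -oE 3 := by
  intro h
  norm_num [oE, mkO, mkH, mkC] at h

/-- In the real octonions (with `i = e₁`, `j = e₂`, `ℓ = e₄`,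
`ℓ⁻¹ = -ℓ`), the vector `w' = (-1, i)ᵀ` obtained from the kernel vector `w = (-ℓ, iℓ)ᵀ`
of `B = [[i, 1],[ij, j]]` by componentwise right multiplication by `ℓ⁻¹ = -ℓ` is not in
the kernel of `B`: `Bw' ≠ 0`. So eigenvectors for a left eigenvalue of an octonion
matrix are not closed under right scalar multiplication. -/
theorem stmt19 :
    Matrix.mulVec !![oE 1, 1; oE 1 * oE 2, oE 2] ![-(oE 4), oE 1 * oE 4] = 0 ∧
    (∀ k, (![-(oE 4), oE 1 * oE 4] : Fin 2 → Octonion) k * (-(oE 4))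
        = (![-1, oE 1] : Fin 2 → Octonion) k) ∧
    Matrix.mulVec !![oE 1, 1; oE 1 * oE 2, oE 2] ![-1, oE 1] ≠ 0 := by
  refine ⟨?_, ?_, ?_⟩
  · rw [Matrix.mulVec_vec2, mul_neg, mul_neg, one_mul, oE_one_mul_oE_two, oE_three_mul_oE_four,
      oE_one_mul_oE_four, oE_two_mul_oE_five, neg_add_cancel, neg_add_cancel]
    simp
  · intro k
    fin_cases k
    · exact (neg_mul_neg _ _).trans oE_four_mul_oE_four
    · change oE 1 * oE 4 * -oE 4 = oE 1
      rw [oE_one_mul_oE_four, mul_neg, oE_five_mul_oE_four, neg_neg]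
  · rw [Matrix.mulVec_vec2, oE_one_mul_oE_two, oE_two_mul_oE_one, mul_neg_one, mul_neg_one,
      one_mul, neg_add_cancel]
    simpa [neg_add_eq_zero] using oE_three_ne_neg
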